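/- Let (g, ∂, [·,·]) be a dg Lie algebra with a complete decreasing filtration (F^m g)_m by subcomplexes satisfying [F^m, F^{m'}] ⊆ F^{m+m'}, and let x̄, Δ ∈ g_{−1} with Δ ∈ F^{N} g for some N ≥ 1 and x̄ ∈ F^1 g. If ∂x̄ − (1/2)[x̄, x̄] ∈ F^{N} g and ∂Δ + (∂x̄ − (1/2)[x̄,x̄]) ∈ F^{N+1} g, then setting x̄' := x̄ + Δ, one has ∂x̄' − (1/2)[x̄', x̄'] ∈ F^{N+1} g. -/

import Mathlib

/-- Transport along an equality of degrees in a ℤ-graded family. -/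
def trC {F : ℤ → Type*} {i j : ℤ} (h : i = j) (x : F i) : F j := h ▸ x

/-!
The Maurer–Cartan defect of `x̄ + Δ` is the defect of `x̄` plus `∂Δ`, minus half of the cross
terms `[x̄, Δ] + [Δ, x̄] + [Δ, Δ]`. These lie in `F^{N+1}` because `x̄ ∈ F^1`, `Δ ∈ F^N` and
`N ≥ 1`, and the first part lies there by hypothesis.
-/

section Correction

variable {R M P : Type*} [CommRing R] [AddCommGroup M] [AddCommGroup P] [Module R M] [Module R P]

theorem LinearMap.map_add_self_add_self (B : M →ₗ[R] M →ₗ[R] P) (x y : M) :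
    B (x + y) (x + y) = B x x + (B x y + B y x + B y y) := by
  simp only [map_add, LinearMap.add_apply]
  abel

theorem sub_smul_apply_add_self_mem (d : M →ₗ[R] P) (B : M →ₗ[R] M →ₗ[R] P) (c : R)
    (S : Submodule R P) {x y : M} (h : d y + (d x - c • B x x) ∈ S)
    (hxy : B x y ∈ S) (hyx : B y x ∈ S) (hyy : B y y ∈ S) :
    d (x + y) - c • B (x + y) (x + y) ∈ S := by
  have hexp : d (x + y) - c • B (x + y) (x + y)
      = (d y + (d x - c • B x x)) - c • (B x y + B y x + B y y) := by
    rw [B.map_add_self_add_self, map_add, smul_add]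
    abel
  rw [hexp]
  exact S.sub_mem h (S.smul_mem c (S.add_mem (S.add_mem hxy hyx) hyy))

end Correction

/-- Let `g` be a dg Lie algebra with a complete decreasing filtration
`(F^m g)` by subcomplexes satisfying `[F^m, F^{m'}] ⊆ F^{m+m'}`, and let `x̄, Δ ∈ g_{−1}`
with `Δ ∈ F^N` (`N ≥ 1`) and `x̄ ∈ F^1`. If `∂x̄ − (1/2)[x̄, x̄] ∈ F^N` and
`∂Δ + (∂x̄ − (1/2)[x̄,x̄]) ∈ F^{N+1}`, then `x̄' := x̄ + Δ` satisfies
`∂x̄' − (1/2)[x̄', x̄'] ∈ F^{N+1}`. -/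
theorem stmt10 {K : Type*} [Field K]
    (G : ℤ → Type*) [∀ i, AddCommGroup (G i)] [∀ i, Module K (G i)]
    (d : ∀ i, G i →ₗ[K] G (i - 1))
    (br : ∀ i j, G i →ₗ[K] G j →ₗ[K] G (i + j))
    -- the filtration, by subcomplexes, decreasing, compatible with the bracket, complete
    (F : ℤ → ∀ i, Submodule K (G i))
    (hdec : ∀ m m' : ℤ, m ≤ m' → ∀ i, F m' i ≤ F m i)
    (hbrF : ∀ (m m' i j : ℤ) (v : G i) (w : G j),
      v ∈ F m i → w ∈ F m' j → br i j v w ∈ F (m + m') (i + j))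
    (N : ℤ) (hN : 1 ≤ N)
    (xb Δ : G (-1)) (hΔ : Δ ∈ F N (-1)) (hxb : xb ∈ F 1 (-1))
    (h2 : d (-1) Δ + (d (-1) xb - (1 / 2 : K) •
        trC (show (-1 : ℤ) + (-1) = (-1) - 1 by omega) (br (-1) (-1) xb xb))
        ∈ F (N + 1) ((-1) - 1)) :
    d (-1) (xb + Δ) - (1 / 2 : K) •
        trC (show (-1 : ℤ) + (-1) = (-1) - 1 by omega) (br (-1) (-1) (xb + Δ) (xb + Δ))
      ∈ F (N + 1) ((-1) - 1) := by
  let B : G (-1) →ₗ[K] G (-1) →ₗ[K] G ((-1) - 1) := br (-1) (-1)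
  have hbr : ∀ {m m' : ℤ} {v w : G (-1)}, v ∈ F m (-1) → w ∈ F m' (-1) → N + 1 ≤ m + m' →
      B v w ∈ F (N + 1) ((-1) - 1) :=
    fun hv hw hle => hdec _ _ hle _ (hbrF _ _ _ _ _ _ hv hw)
  exact sub_smul_apply_add_self_mem (d (-1)) B (1 / 2) _ h2
    (hbr hxb hΔ (by omega)) (hbr hΔ hxb (by omega)) (hbr hΔ hΔ (by omega))
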